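/- Under the bootstrap distribution, for 1 ≤ t ≤ n−1, the between-group edge count satisfies E_B[R_G(t)] = p1^B(t)·|G| and Var_B[R_G(t)] = p2^B(t)·|G| + (p1^B(t)/2 − p2^B(t))·Σ_i |G_i|², where p1^B(t) = 2t(n−t)/n² and p2^B(t) = 4t²(n−t)²/n⁴. -/

import Mathlib

open Finset Filter Asymptotics MeasureTheory Topology ProbabilityTheory

namespace GraphCP

noncomputable def edgeFS {n : ℕ} (G : SimpleGraph (Fin n)) : Finset (Sym2 (Fin n)) :=
  letI : DecidableRel G.Adj := Classical.decRel _
  G.edgeFinset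

noncomputable def deg {n : ℕ} (G : SimpleGraph (Fin n)) (i : Fin n) : ℕ :=
  letI : DecidableRel G.Adj := Classical.decRel _
  G.degree i

/-- Indicator that the two endpoints of an edge lie in different groups. -/
def crossInd {n : ℕ} (g : Fin n → Bool) : Sym2 (Fin n) → ℝ :=
  Sym2.lift ⟨fun i j => if g i ≠ g j then 1 else 0, by
    intro i j
    by_cases h : g i = g j <;> simp [h, Ne, eq_comm]⟩

/-- `g_i(t) = 1{π(i) > t}`, where the label of `i` is `π(i) = (f i).val + 1 ∈ {1,…,n}`. -/
def gOne (n t : ℕ) (f : Fin n → Fin n) (i : Fin n) : Bool :=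
  decide (t < (f i : ℕ) + 1)

/-- `g_i(t₁,t₂) = 1{t₁ < π(i) ≤ t₂}`. -/
def gTwo (n t₁ t₂ : ℕ) (f : Fin n → Fin n) (i : Fin n) : Bool :=
  decide (t₁ < (f i : ℕ) + 1 ∧ (f i : ℕ) + 1 ≤ t₂)

noncomputable def RoneF {n : ℕ} (G : SimpleGraph (Fin n)) (t : ℕ) (f : Fin n → Fin n) : ℝ :=
  ∑ e ∈ edgeFS G, crossInd (gOne n t f) e

noncomputable def Rone {n : ℕ} (G : SimpleGraph (Fin n)) (t : ℕ) (π : Equiv.Perm (Fin n)) : ℝ :=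
  RoneF G t ⇑π

noncomputable def Rtwo {n : ℕ} (G : SimpleGraph (Fin n)) (t₁ t₂ : ℕ)
    (π : Equiv.Perm (Fin n)) : ℝ :=
  ∑ e ∈ edgeFS G, crossInd (gTwo n t₁ t₂ ⇑π) e

noncomputable def permExp (n : ℕ) (X : Equiv.Perm (Fin n) → ℝ) : ℝ :=
  (∑ π : Equiv.Perm (Fin n), X π) / (Nat.factorial n : ℝ)

noncomputable def permVar (n : ℕ) (X : Equiv.Perm (Fin n) → ℝ) : ℝ :=
  permExp n (fun π => (X π - permExp n X) ^ 2)

noncomputable def permCov (n : ℕ) (X Y : Equiv.Perm (Fin n) → ℝ) : ℝ :=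
  permExp n (fun π => (X π - permExp n X) * (Y π - permExp n Y))

noncomputable def p1 (n t : ℕ) : ℝ := 2 * t * ((n : ℝ) - t) / ((n : ℝ) * ((n : ℝ) - 1))

noncomputable def p2 (n t : ℕ) : ℝ :=
  4 * t * ((t : ℝ) - 1) * ((n : ℝ) - t) * ((n : ℝ) - t - 1) /
    ((n : ℝ) * ((n : ℝ) - 1) * ((n : ℝ) - 2) * ((n : ℝ) - 3))

noncomputable def numEdges {n : ℕ} (G : SimpleGraph (Fin n)) : ℝ := ((edgeFS G).card : ℝ)

noncomputable def degSq {n : ℕ} (G : SimpleGraph (Fin n)) : ℝ :=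
  ∑ i : Fin n, (deg G i : ℝ) ^ 2

noncomputable def Zone {n : ℕ} (G : SimpleGraph (Fin n)) (t : ℕ) (π : Equiv.Perm (Fin n)) : ℝ :=
  -(Rone G t π - permExp n (Rone G t)) / Real.sqrt (permVar n (Rone G t))

noncomputable def Ztwo {n : ℕ} (G : SimpleGraph (Fin n)) (t₁ t₂ : ℕ)
    (π : Equiv.Perm (Fin n)) : ℝ :=
  -(Rtwo G t₁ t₂ π - permExp n (Rtwo G t₁ t₂)) / Real.sqrt (permVar n (Rtwo G t₁ t₂))


/-- Expectation under the bootstrap distribution: the labels `π(1),…,π(n)` are i.i.d.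
uniform on `{1,…,n}`, i.e. uniform over all `nⁿ` functions `Fin n → Fin n`. -/
noncomputable def bootExp (n : ℕ) (X : (Fin n → Fin n) → ℝ) : ℝ :=
  (∑ f : Fin n → Fin n, X f) / ((n : ℝ) ^ n)

noncomputable def bootVar (n : ℕ) (X : (Fin n → Fin n) → ℝ) : ℝ :=
  bootExp n (fun f => (X f - bootExp n X) ^ 2)

noncomputable def p1B (n t : ℕ) : ℝ := 2 * t * ((n : ℝ) - t) / (n : ℝ) ^ 2

noncomputable def p2B (n t : ℕ) : ℝ := 4 * (t : ℝ) ^ 2 * ((n : ℝ) - t) ^ 2 / (n : ℝ) ^ 4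

end GraphCP

/-!
Write `b_i = 1{π(i) > t}`, `q = 𝔼 b_i = (n - t)/n` and `c_i = b_i - q`. On an edge,
`1{b_i ≠ b_j} = 2q(1 - q) + (1 - 2q)(c_i + c_j) - 2 c_i c_j`, so
`R_G(t) = p₁ᴮ(t)|G| + (1 - 2q) Σ_i |G_i| c_i - 2 Σ_{ij ∈ G} c_i c_j`.
The labels are independent and the `c_i` centred, so the products `∏_{i ∈ S} c_i` over
different sets `S` are orthogonal, with second moment `(q(1 - q))^|S|`. Hence
`Var R_G(t) = (1 - 2q)² q(1 - q) Σ_i |G_i|² + 4 (q(1 - q))² |G|`, which is the claim because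
`p₁ᴮ(t) = 2q(1 - q)`.
-/

open scoped BigOperators

section Walsh

variable {ι α 𝕜 : Type*} [Fintype ι] [DecidableEq ι] [Fintype α] [Semifield 𝕜] [CharZero 𝕜]

lemma expect_prod_eq_prod_expect (h : ι → α → 𝕜) :
    𝔼 f : ι → α, ∏ i, h i (f i) = ∏ i, 𝔼 x, h i x := by
  simp only [Fintype.expect_eq_sum_div_card, ← Fintype.prod_sum, prod_div_distrib, prod_const,
    Fintype.card_fun, card_univ, Nat.cast_pow]

def walsh (c : α → 𝕜) (S : Finset ι) (f : ι → α) : 𝕜 := ∏ i ∈ S, c (f i)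

variable [Nonempty α] {c : α → 𝕜}

lemma expect_walsh_mul_walsh (hc : 𝔼 x, c x = 0) (S T : Finset ι) :
    𝔼 f : ι → α, walsh c S f * walsh c T f = if S = T then (𝔼 x, c x ^ 2) ^ #S else 0 := by
  have hprod : ∀ f : ι → α, walsh c S f * walsh c T f =
      ∏ i, (if i ∈ S then c (f i) else 1) * (if i ∈ T then c (f i) else 1) := fun f => by
    rw [prod_mul_distrib, Fintype.prod_ite_mem, Fintype.prod_ite_mem, walsh, walsh]
  simp_rw [hprod]
  refine (expect_prod_eq_prod_expect fun i x =>
    (if i ∈ S then c x else 1) * (if i ∈ T then c x else 1)).trans ?_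
  split_ifs with hST
  · subst hST
    have hfactor : ∀ i, 𝔼 x, (if i ∈ S then c x else 1) * (if i ∈ S then c x else 1) =
        if i ∈ S then 𝔼 x, c x ^ 2 else 1 := fun i => by
      split_ifs <;> simp [sq]
    simp_rw [hfactor, Fintype.prod_ite_mem, prod_const]
  · obtain ⟨i, hi⟩ : ∃ i, ¬(i ∈ S ↔ i ∈ T) := by simpa [Finset.ext_iff] using hST
    refine prod_eq_zero (mem_univ i) ?_
    by_cases hS : i ∈ S <;> simp_all

lemma expect_walsh (hc : 𝔼 x, c x = 0) {S : Finset ι} (hS : S.Nonempty) :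
    𝔼 f : ι → α, walsh c S f = 0 := by
  simpa [walsh, hS.ne_empty] using expect_walsh_mul_walsh hc S ∅

lemma expect_sum_walsh_mul_sum_walsh (hc : 𝔼 x, c x = 0) {κ κ' : Type*} (K : Finset κ)
    (K' : Finset κ') (a : κ → 𝕜) (b : κ' → 𝕜) (s : κ → Finset ι) (s' : κ' → Finset ι) :
    𝔼 f : ι → α, (∑ k ∈ K, a k * walsh c (s k) f) * (∑ l ∈ K', b l * walsh c (s' l) f) =
      ∑ k ∈ K, ∑ l ∈ K', if s k = s' l then a k * b l * (𝔼 x, c x ^ 2) ^ #(s k) else 0 := by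
  simp_rw [sum_mul_sum, expect_sum_comm]
  refine sum_congr rfl fun k _ => sum_congr rfl fun l _ => ?_
  have hrearrange : ∀ f : ι → α, a k * walsh c (s k) f * (b l * walsh c (s' l) f) =
      a k * b l * (walsh c (s k) f * walsh c (s' l) f) := fun f => by ring
  simp_rw [hrearrange, ← mul_expect, expect_walsh_mul_walsh hc, mul_ite, mul_zero]

end Walsh

lemma expect_sub_expect_sq_of_sq_eq_self {α 𝕜 : Type*} [Fintype α] [Nonempty α] [Field 𝕜]
    [CharZero 𝕜] (b : α → 𝕜) (hb : ∀ x, b x ^ 2 = b x) :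
    𝔼 x, (b x - 𝔼 y, b y) ^ 2 = (𝔼 y, b y) * (1 - 𝔼 y, b y) := by
  simp_rw [sub_sq, hb, expect_add_distrib, expect_sub_distrib, ← expect_mul, ← mul_expect,
    Fintype.expect_const]
  ring

lemma Sym2.toFinset_injective {V : Type*} [DecidableEq V] :
    Function.Injective (Sym2.toFinset : Sym2 V → Finset V) := fun e e' h =>
  Sym2.ext fun v => by rw [← Sym2.mem_toFinset, h, Sym2.mem_toFinset]

lemma SimpleGraph.sum_edgeFinset_sum_toFinset {V M : Type*} [Fintype V] [DecidableEq V]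
    [AddCommMonoid M] (G : SimpleGraph V) [DecidableRel G.Adj] (w : V → M) :
    ∑ e ∈ G.edgeFinset, ∑ v ∈ e.toFinset, w v = ∑ v, G.degree v • w v := by
  rw [sum_comm' (t' := univ) (s' := fun v => G.incidenceFinset v) fun e v => by
    simp [SimpleGraph.incidenceSet, Sym2.mem_toFinset, and_comm]]
  simp

namespace GraphCP

variable {n : ℕ}

lemma bootExp_eq_expect (X : (Fin n → Fin n) → ℝ) : bootExp n X = 𝔼 f, X f := by
  rw [bootExp, Fintype.expect_eq_sum_div_card, Fintype.card_fun, Fintype.card_fin]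
  push_cast
  rfl

lemma bootVar_eq_expect (X : (Fin n → Fin n) → ℝ) :
    bootVar n X = 𝔼 f, (X f - 𝔼 g, X g) ^ 2 := by
  simp only [bootVar, bootExp_eq_expect]

lemma crossInd_eq (g : Fin n → Bool) (q : ℝ) {e : Sym2 (Fin n)} (he : ¬e.IsDiag) :
    crossInd g e = 2 * q * (1 - q)
      + (1 - 2 * q) * ∑ v ∈ e.toFinset, ((if g v then 1 else 0) - q)
      - 2 * ∏ v ∈ e.toFinset, ((if g v then 1 else 0) - q) := by
  induction e using Sym2.ind with
  | _ i j =>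
    have hij : i ≠ j := by simpa using he
    rw [crossInd, Sym2.lift_mk, Sym2.toFinset_mk_eq, sum_pair hij, prod_pair hij]
    rcases hgi : g i <;> rcases hgj : g j <;> simp [hgi, hgj] <;> ring

def above (t : ℕ) (x : Fin n) : ℝ := if t < (x : ℕ) + 1 then 1 else 0

lemma expect_above {t : ℕ} (ht : t ≤ n) : 𝔼 x : Fin n, above t x = ((n : ℝ) - t) / n := by
  have hcard : #{x : Fin n | t < (x : ℕ) + 1} = n - t := by
    have hlt := Fin.card_filter_val_lt (n := n) (m := t)
    have hsplit := card_filter_add_card_filter_not (s := univ) fun x : Fin n => (x : ℕ) < t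
    simp only [not_lt, card_univ, Fintype.card_fin] at hsplit
    simp only [Nat.lt_succ_iff]
    omega
  rw [Fintype.expect_eq_sum_div_card, Fintype.card_fin]
  simp only [above, sum_boole, hcard, Nat.cast_sub ht]

lemma not_isDiag_of_mem_edgeFS {G : SimpleGraph (Fin n)} {e : Sym2 (Fin n)}
    (he : e ∈ edgeFS G) : ¬e.IsDiag := by
  classical
  exact G.not_isDiag_of_mem_edgeSet (by simpa [edgeFS] using he)

variable {α : Type*} [Fintype α]

noncomputable def linPart (G : SimpleGraph (Fin n)) (c : α → ℝ) (f : Fin n → α) : ℝ :=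
  ∑ v, (deg G v : ℝ) * walsh c {v} f

noncomputable def quadPart (G : SimpleGraph (Fin n)) (c : α → ℝ) (f : Fin n → α) : ℝ :=
  ∑ e ∈ edgeFS G, walsh c e.toFinset f

variable [Nonempty α] {c : α → ℝ} (G : SimpleGraph (Fin n))

lemma expect_linPart_mul_linPart (hc : 𝔼 x, c x = 0) :
    𝔼 f, linPart G c f * linPart G c f = (𝔼 x, c x ^ 2) * degSq G := by
  have h := expect_sum_walsh_mul_sum_walsh hc univ univ (fun v => (deg G v : ℝ))
    (fun v => (deg G v : ℝ)) singleton singleton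
  simp only [singleton_inj, card_singleton, pow_one, sum_ite_eq, mem_univ, if_true] at h
  rw [degSq, mul_sum]
  simpa [linPart, sq, mul_comm] using h

lemma expect_linPart_mul_quadPart (hc : 𝔼 x, c x = 0) :
    𝔼 f, linPart G c f * quadPart G c f = 0 := by
  have h := expect_sum_walsh_mul_sum_walsh hc univ (edgeFS G) (fun v => (deg G v : ℝ))
    (fun _ => 1) singleton Sym2.toFinset
  simp only [mul_one, one_mul] at h
  simp only [linPart, quadPart]
  rw [h]
  refine sum_eq_zero fun v _ => sum_eq_zero fun e he => if_neg fun hve => ?_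
  have := congrArg card hve
  rw [card_singleton, Sym2.card_toFinset_of_not_isDiag e (not_isDiag_of_mem_edgeFS he)] at this
  exact absurd this (by norm_num)

lemma expect_quadPart_mul_quadPart (hc : 𝔼 x, c x = 0) :
    𝔼 f, quadPart G c f * quadPart G c f = (𝔼 x, c x ^ 2) ^ 2 * numEdges G := by
  have h := expect_sum_walsh_mul_sum_walsh hc (edgeFS G) (edgeFS G) (fun _ => (1 : ℝ))
    (fun _ => 1) Sym2.toFinset Sym2.toFinset
  simp only [mul_one, one_mul, Sym2.toFinset_injective.eq_iff, sum_ite_eq] at h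
  simp only [quadPart]
  rw [h, numEdges, mul_comm, ← nsmul_eq_mul, ← sum_const]
  refine sum_congr rfl fun e he => ?_
  rw [if_pos he, Sym2.card_toFinset_of_not_isDiag e (not_isDiag_of_mem_edgeFS he)]

lemma expect_linPart_sub_quadPart (hc : 𝔼 x, c x = 0) (a b : ℝ) :
    𝔼 f, (a * linPart G c f - b * quadPart G c f) = 0 := by
  have hL : 𝔼 f, linPart G c f = 0 := by
    simp only [linPart]
    rw [expect_sum_comm]
    exact sum_eq_zero fun v _ => by rw [← mul_expect, expect_walsh hc (singleton_nonempty v),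
      mul_zero]
  have hQ : 𝔼 f, quadPart G c f = 0 := by
    simp only [quadPart]
    rw [expect_sum_comm]
    exact sum_eq_zero fun e _ =>
      expect_walsh hc (nonempty_iff_ne_empty.mpr (Sym2.toFinset_ne_empty e))
  rw [expect_sub_distrib, ← mul_expect, ← mul_expect, hL, hQ, mul_zero, mul_zero, sub_zero]

lemma expect_sq_linPart_sub_quadPart (hc : 𝔼 x, c x = 0) (a b : ℝ) :
    𝔼 f, (a * linPart G c f - b * quadPart G c f) ^ 2 =
      a ^ 2 * (𝔼 x, c x ^ 2) * degSq G + b ^ 2 * (𝔼 x, c x ^ 2) ^ 2 * numEdges G := by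
  have hexpand : ∀ f, (a * linPart G c f - b * quadPart G c f) ^ 2 =
      a ^ 2 * (linPart G c f * linPart G c f) - 2 * a * b * (linPart G c f * quadPart G c f)
        + b ^ 2 * (quadPart G c f * quadPart G c f) := fun f => by ring
  simp_rw [hexpand, expect_add_distrib, expect_sub_distrib, ← mul_expect,
    expect_linPart_mul_linPart G hc, expect_linPart_mul_quadPart G hc,
    expect_quadPart_mul_quadPart G hc]
  ring

lemma RoneF_eq (t : ℕ) (q : ℝ) (f : Fin n → Fin n) :
    RoneF G t f = 2 * q * (1 - q) * numEdges G
      + ((1 - 2 * q) * linPart G (fun x => above t x - q) f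
        - 2 * quadPart G (fun x => above t x - q) f) := by
  have hlabel : ∀ v, (if gOne n t f v then (1 : ℝ) else 0) - q = above t (f v) - q := by
    simp [gOne, above]
  have hcross : ∀ e ∈ edgeFS G, crossInd (gOne n t f) e = 2 * q * (1 - q)
      + (1 - 2 * q) * ∑ v ∈ e.toFinset, (above t (f v) - q)
      - 2 * walsh (fun x => above t x - q) e.toFinset f := fun e he => by
    simp only [crossInd_eq _ q (not_isDiag_of_mem_edgeFS he), hlabel, walsh]
  have hdeg : ∑ e ∈ edgeFS G, ∑ v ∈ e.toFinset, (above t (f v) - q) =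
      linPart G (fun x => above t x - q) f := by
    classical
    simpa [edgeFS, deg, linPart, walsh] using
      G.sum_edgeFinset_sum_toFinset fun v => above t (f v) - q
  rw [RoneF, sum_congr rfl hcross, sum_sub_distrib, sum_add_distrib, sum_const, ← mul_sum,
    ← mul_sum, hdeg, numEdges, nsmul_eq_mul, quadPart]
  ring

theorem bootstrap_moments_R_one_general (n : ℕ) (hn : 0 < n) (G : SimpleGraph (Fin n))
    (t : ℕ) (ht2 : t ≤ n - 1) :
    bootExp n (RoneF G t) = p1B n t * numEdges G ∧
      bootVar n (RoneF G t) = p2B n t * numEdges G + (p1B n t / 2 - p2B n t) * degSq G := by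
  have : NeZero n := ⟨hn.ne'⟩
  set q := 𝔼 x : Fin n, above t x
  have hq : q = ((n : ℝ) - t) / n := expect_above (by omega)
  have hc : 𝔼 x : Fin n, (above t x - q) = 0 := by
    rw [expect_sub_distrib, Fintype.expect_const, sub_self]
  have hvar : 𝔼 x : Fin n, (above t x - q) ^ 2 = q * (1 - q) :=
    expect_sub_expect_sq_of_sq_eq_self _ fun x => by unfold above; split_ifs <;> norm_num
  have hp1B : p1B n t = 2 * q * (1 - q) := by
    rw [hq, p1B]
    field_simp
    ring
  have hp2B : p2B n t = (2 * q * (1 - q)) ^ 2 := by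
    rw [hq, p2B]
    field_simp
    ring
  have hmean : 𝔼 f, RoneF G t f = p1B n t * numEdges G := by
    simp_rw [RoneF_eq G t q, expect_add_distrib, Fintype.expect_const,
      expect_linPart_sub_quadPart G hc, hp1B, add_zero]
  refine ⟨by rw [bootExp_eq_expect, hmean], ?_⟩
  rw [bootVar_eq_expect, hmean]
  simp_rw [RoneF_eq G t q, ← hp1B, add_sub_cancel_left, expect_sq_linPart_sub_quadPart G hc, hvar,
    hp2B, hp1B]
  ring

/-- Under the bootstrap distribution, `E_B[R_G(t)] = p₁ᴮ(t)·|G|` and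
`Var_B[R_G(t)] = p₂ᴮ(t)·|G| + (p₁ᴮ(t)/2 − p₂ᴮ(t))·Σᵢ|Gᵢ|²`, where
`p₁ᴮ(t) = 2t(n−t)/n²` and `p₂ᴮ(t) = 4t²(n−t)²/n⁴`. -/
theorem bootstrap_moments_R_one (n : ℕ) (hn : 0 < n) (G : SimpleGraph (Fin n))
    (t : ℕ) (ht1 : 1 ≤ t) (ht2 : t ≤ n - 1) :
    bootExp n (RoneF G t) = p1B n t * numEdges G ∧
      bootVar n (RoneF G t) = p2B n t * numEdges G + (p1B n t / 2 - p2B n t) * degSq G :=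
  bootstrap_moments_R_one_general n hn G t ht2

end GraphCP
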